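/- arXiv:2004.03105 — 2 statements merged into one kernel-verified Lean document; each statement's English description precedes it below -/
import Mathlib

section
/- Combined decoupling theorem: for X Hermitian and Y complex symmetric, there exists a unitary E with E X E† and E Y Eᵀ both real if and only if there exist a unitary Z with Y = Z† Y₀ Z* (Y₀ real non-negative diagonal) and a diagonal R with entries in {1, i} such that R† Z X Z† R is real. -/
/-!
If `E X Eᴴ` and `E Y Eᵀ` are real, the real symmetric matrix `E Y Eᵀ` is diagonalised by a real
orthogonal `Q`, say `Q E Y Eᵀ Qᵀ = diag μ`. Choosing `r_j ∈ {1, i}` with `r̄_j² μ_j = |μ_j|`, the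
unitary `Z = R̄ Q E` (`R = diag r`) satisfies `Z Y Zᵀ = diag |μ|`, which for unitary `Z` is the
Autonne–Takagi form `Y = Zᴴ Y₀ Z̄`, and `R̄ Z X Zᴴ R = R̄² Q (E X Eᴴ) Qᵀ R²` is real because `R²`
is. Conversely `E = R̄ Z` works, since `E Y Eᵀ = R̄ Y₀ R̄ = diag (r̄_j² σ_j)`.
-/

open Matrix Complex

namespace Matrix

variable {l m n : Type*}

def IsReal (M : Matrix m n ℂ) : Prop := ∀ i j, (M i j).im = 0

theorem IsReal.mul [Fintype n] {M : Matrix l n ℂ} {N : Matrix n m ℂ} (hM : M.IsReal)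
    (hN : N.IsReal) : (M * N).IsReal := fun i j => by
  simp [mul_apply, Complex.im_sum, Complex.mul_im, hM i, hN _ j]

theorem IsReal.conjTranspose {M : Matrix m n ℂ} (hM : M.IsReal) : Mᴴ.IsReal := fun i j => by
  simp [hM j i]

theorem isReal_map_ofReal (B : Matrix m n ℝ) : (B.map ofRealHom).IsReal := fun i j => by
  simp

theorem isReal_diagonal [DecidableEq n] {d : n → ℂ} (hd : ∀ j, (d j).im = 0) :
    (diagonal d).IsReal :=
  fun i j => by by_cases h : i = j <;> simp [h, hd]

theorem IsReal.map_re_map_ofReal {M : Matrix m n ℂ} (hM : M.IsReal) :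
    (M.map re).map ofRealHom = M := by
  ext i j; exact Complex.ext rfl (hM i j).symm

theorem map_mem_unitaryGroup [Fintype n] [DecidableEq n] {α β : Type*} [CommRing α] [StarRing α]
    [CommRing β] [StarRing β] (f : α →+* β) (hf : ∀ a, f (star a) = star (f a))
    {U : Matrix n n α} (hU : U ∈ unitaryGroup n α) : U.map f ∈ unitaryGroup n β := by
  rw [mem_unitaryGroup_iff, star_eq_conjTranspose, ← conjTranspose_map f hf, ← Matrix.map_mul,
    ← star_eq_conjTranspose, mem_unitaryGroup_iff.mp hU, Matrix.map_one f f.map_zero f.map_one]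

theorem diagonal_mem_unitaryGroup [Fintype n] [DecidableEq n] {α : Type*} [CommRing α]
    [StarRing α] {d : n → α} (hd : ∀ j, star (d j) * d j = 1) :
    diagonal d ∈ unitaryGroup n α := by
  rw [mem_unitaryGroup_iff', star_eq_conjTranspose, diagonal_conjTranspose,
    diagonal_mul_diagonal]
  exact (congrArg diagonal (funext hd)).trans diagonal_one

theorem diagonal_mul_diagonal_mul_transpose [Fintype n] [DecidableEq n] {α : Type*}
    [CommSemiring α] (s d : n → α) :
    diagonal s * diagonal d * (diagonal s)ᵀ = diagonal (fun j => s j * d j * s j) := by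
  rw [diagonal_transpose, diagonal_mul_diagonal, diagonal_mul_diagonal]

theorem eq_conjTranspose_mul_mul_map_iff [Fintype n] [DecidableEq n] {α : Type*} [CommRing α]
    [StarRing α] {Z : Matrix n n α} (hZ : Z ∈ unitaryGroup n α) (Y D : Matrix n n α) :
    Y = Zᴴ * D * Z.map (starRingEnd α) ↔ Z * Y * Zᵀ = D := by
  have hZT := transpose_mem_unitaryGroup_iff.mpr hZ
  have h₁ : Z * Zᴴ = 1 := mem_unitaryGroup_iff.mp hZ
  have h₂ : Zᴴ * Z = 1 := mem_unitaryGroup_iff'.mp hZ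
  have h₃ : Z.map (starRingEnd α) * Zᵀ = 1 := mem_unitaryGroup_iff'.mp hZT
  have h₄ : Zᵀ * Z.map (starRingEnd α) = 1 := mem_unitaryGroup_iff.mp hZT
  constructor
  · rintro rfl
    simp only [Matrix.mul_assoc]
    rw [h₃, Matrix.mul_one, ← Matrix.mul_assoc, h₁, Matrix.one_mul]
  · rintro rfl
    simp only [Matrix.mul_assoc]
    rw [h₄, Matrix.mul_one, ← Matrix.mul_assoc, h₂, Matrix.one_mul]

theorem IsSymm.exists_real_unitary_mul_mul_transpose_eq_diagonal [Fintype n] [DecidableEq n]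
    {A : Matrix n n ℂ} (hA : A.IsSymm) (hre : A.IsReal) :
    ∃ (Q : Matrix n n ℂ) (μ : n → ℝ), Q ∈ unitaryGroup n ℂ ∧ Q.IsReal ∧
      Q * A * Qᵀ = diagonal (fun j => (μ j : ℂ)) := by
  have hB : (A.map re).IsHermitian := isHermitian_iff_isSymm.mpr (hA.map re)
  set U := hB.eigenvectorUnitary
  have hUT : (star (U : Matrix n n ℝ))ᵀ = U := by
    rw [star_eq_conjTranspose, conjTranspose_eq_transpose_of_trivial, transpose_transpose]
  have hdiag := hB.conjStarAlgAut_star_eigenvectorUnitary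
  rw [Unitary.conjStarAlgAut_star_apply] at hdiag
  refine ⟨(star (U : Matrix n n ℝ)).map ofRealHom, hB.eigenvalues,
    map_mem_unitaryGroup ofRealHom (fun a => (conj_ofReal a).symm) (Unitary.star_mem U.2),
    isReal_map_ofReal _, ?_⟩
  calc _ = (star (U : Matrix n n ℝ) * A.map re * U).map ofRealHom := by
        rw [Matrix.map_mul, Matrix.map_mul, ← transpose_map, hUT, hre.map_re_map_ofReal]
    _ = _ := by rw [hdiag, diagonal_map (map_zero _)]; rfl

end Matrix

namespace Complex

theorem star_mul_self_of_eq_one_or_eq_I {u : ℂ} (hu : u = 1 ∨ u = I) : star u * u = 1 := by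
  rcases hu with rfl | rfl <;> simp

theorem im_mul_self_of_eq_one_or_eq_I {u : ℂ} (hu : u = 1 ∨ u = I) : (u * u).im = 0 := by
  rcases hu with rfl | rfl <;> simp

theorem im_star_mul_ofReal_mul_star_of_eq_one_or_eq_I {u : ℂ} (hu : u = 1 ∨ u = I) (x : ℝ) :
    (star u * x * star u).im = 0 := by
  rcases hu with rfl | rfl <;> simp

noncomputable def sqrtSign (x : ℝ) : ℂ := if x < 0 then I else 1

theorem sqrtSign_eq_one_or_eq_I (x : ℝ) : sqrtSign x = 1 ∨ sqrtSign x = I := by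
  unfold sqrtSign; split_ifs <;> simp

theorem star_sqrtSign_mul_mul_star_sqrtSign (x : ℝ) :
    star (sqrtSign x) * x * star (sqrtSign x) = (|x| : ℝ) := by
  unfold sqrtSign
  split_ifs with h
  · rw [abs_of_neg h, star_def, conj_I]
    push_cast
    linear_combination (x : ℂ) * I_sq
  · simp [abs_of_nonneg (not_lt.mp h)]

end Complex

section Decoupling

variable {n : Type*} [Fintype n] [DecidableEq n]

theorem exists_takagi_of_decoupling {X Y E : Matrix n n ℂ} (hY : Y.IsSymm)
    (hE : E ∈ unitaryGroup n ℂ) (hEX : (E * X * Eᴴ).IsReal) (hEY : (E * Y * Eᵀ).IsReal) :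
    ∃ (Z : Matrix n n ℂ) (σ : n → ℝ) (r : n → ℂ), Z ∈ unitaryGroup n ℂ ∧ (∀ j, 0 ≤ σ j) ∧
      Z * Y * Zᵀ = diagonal (fun j => (σ j : ℂ)) ∧ (∀ j, r j = 1 ∨ r j = I) ∧
      ((diagonal r)ᴴ * Z * X * Zᴴ * diagonal r).IsReal := by
  have hsymm : (E * Y * Eᵀ).IsSymm := by
    rw [IsSymm, transpose_mul, transpose_mul, transpose_transpose, hY.eq, Matrix.mul_assoc]
  obtain ⟨Q, μ, hQ, hQre, hQdiag⟩ :=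
    hsymm.exists_real_unitary_mul_mul_transpose_eq_diagonal hEY
  set r := fun j => sqrtSign (μ j)
  have hr : ∀ j, r j = 1 ∨ r j = I := fun j => sqrtSign_eq_one_or_eq_I (μ j)
  have hR := diagonal_mem_unitaryGroup fun j => star_mul_self_of_eq_one_or_eq_I (hr j)
  have hRR : (diagonal r * diagonal r).IsReal := by
    rw [diagonal_mul_diagonal]; exact isReal_diagonal fun j => im_mul_self_of_eq_one_or_eq_I (hr j)
  refine ⟨(diagonal r)ᴴ * Q * E, fun j => |μ j|, r,
    mul_mem (mul_mem (Unitary.star_mem hR) hQ) hE, fun j => abs_nonneg _, ?_, hr, ?_⟩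
  · calc (diagonal r)ᴴ * Q * E * Y * ((diagonal r)ᴴ * Q * E)ᵀ
          = (diagonal r)ᴴ * (Q * (E * Y * Eᵀ) * Qᵀ) * ((diagonal r)ᴴ)ᵀ := by
            simp only [transpose_mul, Matrix.mul_assoc]
        _ = _ := by
          rw [hQdiag, diagonal_conjTranspose, diagonal_mul_diagonal_mul_transpose]
          exact congrArg diagonal (funext fun j => star_sqrtSign_mul_mul_star_sqrtSign (μ j))
  · have hsandwich : (diagonal r)ᴴ * ((diagonal r)ᴴ * Q * E) * X * ((diagonal r)ᴴ * Q * E)ᴴ * diagonal r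
        = (diagonal r * diagonal r)ᴴ * Q * (E * X * Eᴴ) * Qᴴ * (diagonal r * diagonal r) := by
      simp only [conjTranspose_mul, conjTranspose_conjTranspose, Matrix.mul_assoc]
    rw [hsandwich]
    exact (((hRR.conjTranspose.mul hQre).mul hEX).mul hQre.conjTranspose).mul hRR

theorem exists_decoupling_of_takagi {X Y Z : Matrix n n ℂ} {σ : n → ℝ} {r : n → ℂ}
    (hZ : Z ∈ unitaryGroup n ℂ) (hZY : Z * Y * Zᵀ = diagonal (fun j => (σ j : ℂ)))
    (hr : ∀ j, r j = 1 ∨ r j = I) (hZX : ((diagonal r)ᴴ * Z * X * Zᴴ * diagonal r).IsReal) :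
    ∃ E ∈ unitaryGroup n ℂ, (E * X * Eᴴ).IsReal ∧ (E * Y * Eᵀ).IsReal := by
  have hR := diagonal_mem_unitaryGroup fun j => star_mul_self_of_eq_one_or_eq_I (hr j)
  refine ⟨(diagonal r)ᴴ * Z, mul_mem (Unitary.star_mem hR) hZ, ?_, ?_⟩
  · simpa only [conjTranspose_mul, conjTranspose_conjTranspose, Matrix.mul_assoc] using hZX
  · have hdiag : (diagonal r)ᴴ * Z * Y * ((diagonal r)ᴴ * Z)ᵀ
        = diagonal (fun j => star (r j) * σ j * star (r j)) := by
      calc _ = (diagonal r)ᴴ * (Z * Y * Zᵀ) * ((diagonal r)ᴴ)ᵀ := by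
            simp only [transpose_mul, Matrix.mul_assoc]
        _ = _ := by rw [hZY, diagonal_conjTranspose, diagonal_mul_diagonal_mul_transpose]; rfl
    rw [hdiag]
    exact isReal_diagonal fun j => im_star_mul_ofReal_mul_star_of_eq_one_or_eq_I (hr j) (σ j)

end Decoupling

open Matrix in
theorem decoupling_iff_general {n : ℕ} (X Y : Matrix (Fin n) (Fin n) ℂ)
    (hY : Yᵀ = Y) :
    (∃ E : Matrix (Fin n) (Fin n) ℂ,
      E ∈ Matrix.unitaryGroup (Fin n) ℂ ∧
      (∀ j k, ((E * X * Eᴴ) j k).im = 0) ∧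
      (∀ j k, ((E * Y * Eᵀ) j k).im = 0)) ↔
    (∃ (Z : Matrix (Fin n) (Fin n) ℂ) (σ : Fin n → ℝ) (r : Fin n → ℂ),
      Z ∈ Matrix.unitaryGroup (Fin n) ℂ ∧
      (∀ j, 0 ≤ σ j) ∧
      Y = Zᴴ * Matrix.diagonal (fun j => (σ j : ℂ)) * (Z.map (starRingEnd ℂ)) ∧
      (∀ j, r j = 1 ∨ r j = Complex.I) ∧
      (∀ j k, (((Matrix.diagonal r)ᴴ * Z * X * Zᴴ * Matrix.diagonal r) j k).im = 0)) := by
  constructor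
  · rintro ⟨E, hE, hEX, hEY⟩
    obtain ⟨Z, σ, r, hZ, hσ, hZY, hr, hZX⟩ := exists_takagi_of_decoupling hY hE hEX hEY
    exact ⟨Z, σ, r, hZ, hσ, (eq_conjTranspose_mul_mul_map_iff hZ _ _).mpr hZY, hr, hZX⟩
  · rintro ⟨Z, σ, r, hZ, -, hYZ, hr, hZX⟩
    exact exists_decoupling_of_takagi hZ ((eq_conjTranspose_mul_mul_map_iff hZ _ _).mp hYZ) hr hZX

open Matrix in
/-- Combined decoupling theorem: for `X` Hermitian and `Y` complex symmetric,
there is a unitary `E` making `E X Eᴴ` and `E Y Eᵀ` simultaneously real iff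
there exist an Autonne–Takagi unitary `Z` for `Y` (`Y = Zᴴ Y₀ Z*`, `Y₀` real
non-negative diagonal) and a diagonal `R` with entries in `{1, i}` such that
`Rᴴ Z X Zᴴ R` is real. -/
theorem decoupling_iff {n : ℕ} (X Y : Matrix (Fin n) (Fin n) ℂ)
    (hX : Xᴴ = X) (hY : Yᵀ = Y) :
    (∃ E : Matrix (Fin n) (Fin n) ℂ,
      E ∈ Matrix.unitaryGroup (Fin n) ℂ ∧
      (∀ j k, ((E * X * Eᴴ) j k).im = 0) ∧
      (∀ j k, ((E * Y * Eᵀ) j k).im = 0)) ↔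
    (∃ (Z : Matrix (Fin n) (Fin n) ℂ) (σ : Fin n → ℝ) (r : Fin n → ℂ),
      Z ∈ Matrix.unitaryGroup (Fin n) ℂ ∧
      (∀ j, 0 ≤ σ j) ∧
      Y = Zᴴ * Matrix.diagonal (fun j => (σ j : ℂ)) * (Z.map (starRingEnd ℂ)) ∧
      (∀ j, r j = 1 ∨ r j = Complex.I) ∧
      (∀ j k, (((Matrix.diagonal r)ᴴ * Z * X * Zᴴ * Matrix.diagonal r) j k).im = 0)) :=
  decoupling_iff_general X Y hY
end

section
/- Let Y be complex symmetric with Autonne–Takagi factorizations Y = Z₁† Y₀ Z₁* = Z₂† Y₀ Z₂* where Y₀ has distinct positive diagonal entries. If there exists a diagonal R₁ with entries in {1,i} such that R₁† Z₁ X Z₁† R₁ is real, then there also exists a diagonal R₂ with entries in {1,i} such that R₂† Z₂ X Z₂† R₂ is real. (The decoupling criterion does not depend on the choice of Autonne–Takagi unitary.) -/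
/-!
The unitary `W = Z₂ Z₁ᴴ` intertwines the two factorizations: `W Σ = Σ conj W`, that is
`W j k * σ k = σ j * conj (W j k)`. Taking absolute values, distinct positive `σ` force `W`
to be diagonal, and its diagonal entries are real. So `Z₂ = W Z₁` with `W` real diagonal; `W` commutes
with `R₁` and multiplies the `(j, k)` entry of `R₁ᴴ Z₁ X Z₁ᴴ R₁` by the real number `w j * w k`,
hence `R₂ = R₁` works.
-/

open Matrix ComplexConjugate

namespace Complex

theorem eq_zero_of_mul_ofReal_eq_ofReal_mul_conj {a b : ℝ} (ha : 0 < a) (hb : 0 < b)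
    (hab : a ≠ b) {z : ℂ} (h : z * b = a * conj z) : z = 0 := by
  by_contra hz
  have hnorm := congrArg norm h
  rw [norm_mul, norm_mul, norm_conj, norm_real, norm_real, Real.norm_of_nonneg ha.le,
    Real.norm_of_nonneg hb.le] at hnorm
  exact hab (mul_left_cancel₀ (norm_ne_zero_iff.mpr hz) (hnorm.trans (mul_comm _ _))).symm

theorem im_eq_zero_of_mul_ofReal_eq_ofReal_mul_conj {a : ℝ} (ha : a ≠ 0) {z : ℂ}
    (h : z * a = a * conj z) : z.im = 0 := by
  rw [mul_comm] at h
  exact conj_eq_iff_im.mp (mul_left_cancel₀ (ofReal_ne_zero.mpr ha) h).symm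

end Complex

namespace Matrix

theorem conjTranspose_map_conj {m n : Type*} (A : Matrix m n ℂ) : Aᴴ.map conj = Aᵀ := by
  ext; simp

variable {ι : Type*} [Fintype ι] [DecidableEq ι]

theorem map_conj_mul_transpose_of_mem_unitaryGroup {Z : Matrix ι ι ℂ}
    (hZ : Z ∈ unitaryGroup ι ℂ) : Z.map conj * Zᵀ = 1 := by
  have hZZ : Z * Zᴴ = 1 := mem_unitaryGroup_iff.mp hZ
  rw [← conjTranspose_map_conj, ← Matrix.map_mul, hZZ,
    Matrix.map_one _ (map_zero _) (map_one _)]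

theorem mul_conjTranspose_mul_eq_mul_map_conj {Z₁ Z₂ D : Matrix ι ι ℂ}
    (hZ₁ : Z₁ ∈ unitaryGroup ι ℂ) (hZ₂ : Z₂ ∈ unitaryGroup ι ℂ)
    (h : Z₁ᴴ * D * Z₁.map conj = Z₂ᴴ * D * Z₂.map conj) :
    Z₂ * Z₁ᴴ * D = D * (Z₂ * Z₁ᴴ).map conj := by
  have hZ₂Z₂ : Z₂ * Z₂ᴴ = 1 := mem_unitaryGroup_iff.mp hZ₂
  calc Z₂ * Z₁ᴴ * D = Z₂ * (Z₁ᴴ * D * Z₁.map conj) * Z₁ᵀ := by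
        simp only [Matrix.mul_assoc, map_conj_mul_transpose_of_mem_unitaryGroup hZ₁,
          Matrix.mul_one]
    _ = Z₂ * Z₂ᴴ * D * (Z₂.map conj * Z₁ᵀ) := by rw [h]; simp only [Matrix.mul_assoc]
    _ = D * (Z₂ * Z₁ᴴ).map conj := by
        rw [hZ₂Z₂, Matrix.one_mul, Matrix.map_mul, conjTranspose_map_conj]

theorem eq_diagonal_re_of_mul_diagonal_eq_diagonal_mul_map_conj {σ : ι → ℝ}
    (hpos : ∀ j, 0 < σ j) (hinj : Function.Injective σ) {W : Matrix ι ι ℂ}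
    (h : W * diagonal (fun j => (σ j : ℂ)) = diagonal (fun j => (σ j : ℂ)) * W.map conj) :
    W = diagonal (fun j => ((W j j).re : ℂ)) := by
  ext j k
  have hjk : W j k * σ k = σ j * conj (W j k) := by
    simpa [mul_diagonal, diagonal_mul] using congrFun (congrFun h j) k
  obtain rfl | hne := eq_or_ne j k
  · simp [Complex.ext_iff,
      Complex.im_eq_zero_of_mul_ofReal_eq_ofReal_mul_conj (hpos j).ne' hjk]
  · rw [diagonal_apply_ne _ hne]
    exact Complex.eq_zero_of_mul_ofReal_eq_ofReal_mul_conj (hpos j) (hpos k)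
      (hinj.ne hne) hjk

theorem conjTranspose_diagonal_mul_diagonal_ofReal_mul (r : ι → ℂ) (w : ι → ℝ)
    (Z X : Matrix ι ι ℂ) :
    (diagonal r)ᴴ * (diagonal (fun j => (w j : ℂ)) * Z) * X *
        (diagonal (fun j => (w j : ℂ)) * Z)ᴴ * diagonal r =
      diagonal (fun j => (w j : ℂ)) * ((diagonal r)ᴴ * Z * X * Zᴴ * diagonal r) *
        diagonal (fun j => (w j : ℂ)) := by
  have hw : (diagonal (fun j => (w j : ℂ)))ᴴ = diagonal (fun j => (w j : ℂ)) := by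
    rw [diagonal_conjTranspose]; congr 1; ext; simp
  have hcomm : ∀ v : ι → ℂ, Commute (diagonal v) (diagonal (fun j => (w j : ℂ))) :=
    fun v => by simp only [Commute, SemiconjBy, diagonal_mul_diagonal, mul_comm]
  rw [conjTranspose_mul, hw]
  simp only [Matrix.mul_assoc]
  rw [← Matrix.mul_assoc (diagonal r)ᴴ, diagonal_conjTranspose, (hcomm _).eq, ← (hcomm r).eq]
  simp only [Matrix.mul_assoc]

end Matrix

open Matrix in
theorem decoupling_criterion_wellDefined_general {n : ℕ}
    (X Y Z₁ Z₂ : Matrix (Fin n) (Fin n) ℂ) (σ : Fin n → ℝ)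
    (hZ₁ : Z₁ ∈ Matrix.unitaryGroup (Fin n) ℂ)
    (hZ₂ : Z₂ ∈ Matrix.unitaryGroup (Fin n) ℂ)
    (hσpos : ∀ j, 0 < σ j)
    (hσdistinct : Function.Injective σ)
    (hAT₁ : Y = Z₁ᴴ * Matrix.diagonal (fun j => (σ j : ℂ)) * (Z₁.map (starRingEnd ℂ)))
    (hAT₂ : Y = Z₂ᴴ * Matrix.diagonal (fun j => (σ j : ℂ)) * (Z₂.map (starRingEnd ℂ)))
    (r₁ : Fin n → ℂ) (hr₁ : ∀ j, r₁ j = 1 ∨ r₁ j = Complex.I)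
    (hreal₁ : ∀ j k,
      (((Matrix.diagonal r₁)ᴴ * Z₁ * X * Z₁ᴴ * Matrix.diagonal r₁) j k).im = 0) :
    ∃ r₂ : Fin n → ℂ, (∀ j, r₂ j = 1 ∨ r₂ j = Complex.I) ∧
      ∀ j k,
        (((Matrix.diagonal r₂)ᴴ * Z₂ * X * Z₂ᴴ * Matrix.diagonal r₂) j k).im = 0 := by
  set W := Z₂ * Z₁ᴴ
  have hW : W = diagonal (fun j => ((W j j).re : ℂ)) :=
    eq_diagonal_re_of_mul_diagonal_eq_diagonal_mul_map_conj hσpos hσdistinct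
      (mul_conjTranspose_mul_eq_mul_map_conj hZ₁ hZ₂ (hAT₁.symm.trans hAT₂))
  have hZ₁Z₁ : Z₁ᴴ * Z₁ = 1 := mem_unitaryGroup_iff'.mp hZ₁
  have hZ₂W : Z₂ = W * Z₁ := by rw [Matrix.mul_assoc, hZ₁Z₁, Matrix.mul_one]
  refine ⟨r₁, hr₁, fun j k => ?_⟩
  rw [hZ₂W, hW, conjTranspose_diagonal_mul_diagonal_ofReal_mul, mul_diagonal, diagonal_mul,
    Complex.im_mul_ofReal, Complex.im_ofReal_mul, hreal₁ j k, mul_zero, zero_mul]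

open Matrix in
/-- The decoupling criterion is independent of the choice of Autonne–Takagi
unitary: if `Y = Z₁ᴴ Y₀ Z₁* = Z₂ᴴ Y₀ Z₂*` with `Y₀ = diagonal σ` having
distinct strictly positive entries, and some diagonal `R₁` with entries in
`{1, i}` makes `R₁ᴴ Z₁ X Z₁ᴴ R₁` real, then some diagonal `R₂` with entries
in `{1, i}` makes `R₂ᴴ Z₂ X Z₂ᴴ R₂` real. -/
theorem decoupling_criterion_wellDefined {n : ℕ}
    (X Y Z₁ Z₂ : Matrix (Fin n) (Fin n) ℂ) (σ : Fin n → ℝ)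
    (hX : Xᴴ = X) (hY : Yᵀ = Y)
    (hZ₁ : Z₁ ∈ Matrix.unitaryGroup (Fin n) ℂ)
    (hZ₂ : Z₂ ∈ Matrix.unitaryGroup (Fin n) ℂ)
    (hσpos : ∀ j, 0 < σ j)
    (hσdistinct : Function.Injective σ)
    (hAT₁ : Y = Z₁ᴴ * Matrix.diagonal (fun j => (σ j : ℂ)) * (Z₁.map (starRingEnd ℂ)))
    (hAT₂ : Y = Z₂ᴴ * Matrix.diagonal (fun j => (σ j : ℂ)) * (Z₂.map (starRingEnd ℂ)))
    (r₁ : Fin n → ℂ) (hr₁ : ∀ j, r₁ j = 1 ∨ r₁ j = Complex.I)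
    (hreal₁ : ∀ j k,
      (((Matrix.diagonal r₁)ᴴ * Z₁ * X * Z₁ᴴ * Matrix.diagonal r₁) j k).im = 0) :
    ∃ r₂ : Fin n → ℂ, (∀ j, r₂ j = 1 ∨ r₂ j = Complex.I) ∧
      ∀ j k,
        (((Matrix.diagonal r₂)ᴴ * Z₂ * X * Z₂ᴴ * Matrix.diagonal r₂) j k).im = 0 :=
  decoupling_criterion_wellDefined_general X Y Z₁ Z₂ σ hZ₁ hZ₂ hσpos hσdistinct hAT₁ hAT₂ r₁ hr₁
    hreal₁
end
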